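/- Two-dimensional Haar coefficient decay: if v : [0,1]² → ℝ is Lipschitz continuous with constant L (with respect to the Euclidean metric), then for any two Haar wavelets h_{j,k₁} and h_{j,k₂} at the same level j (with m = 2^j), the coefficient a = ∫_0^1 ∫_0^1 v(x,y) h_{j,k₁}(x) h_{j,k₂}(y) dx dy satisfies |a| ≤ L/(4m³). -/

import Mathlib

open MeasureTheory

/-- The Haar wavelet `h_{j,k}` on `[0, 1)`. -/
noncomputable def haar01 (j k : ℕ) (x : ℝ) : ℝ :=
  if (k : ℝ) / 2 ^ j ≤ x ∧ x < ((k : ℝ) + 1 / 2) / 2 ^ j then 1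
  else if ((k : ℝ) + 1 / 2) / 2 ^ j ≤ x ∧ x < ((k : ℝ) + 1) / 2 ^ j then -1
  else 0


lemma ae_ne (c : ℝ) : ∀ᵐ x : ℝ ∂volume, x ≠ c := by
  simp [ae_iff, not_not, Set.setOf_eq_eq_singleton]

lemma haar_trick' (f : ℝ → ℝ) (a δ : ℝ) (hδ0 : 0 < δ) (ha0 : 0 ≤ a)
    (hub : a + 2*δ ≤ 1) (hf : IntervalIntegrable f volume 0 1) :
    (∫ x in (0:ℝ)..1, f x *
        (if a ≤ x ∧ x < a + δ then 1 else if a + δ ≤ x ∧ x < a + 2*δ then (-1:ℝ) else 0))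
      = ∫ x in a..(a+δ), (f x - f (x + δ)) := by
  set g : ℝ → ℝ := fun x =>
    if a ≤ x ∧ x < a + δ then 1 else if a + δ ≤ x ∧ x < a + 2*δ then (-1:ℝ) else 0 with hg
  have hgm : Measurable g := by
    apply Measurable.ite (measurableSet_Ico (a := a) (b := a + δ)) measurable_const
    exact Measurable.ite (measurableSet_Ico (a := a + δ) (b := a + 2*δ)) measurable_const
      measurable_const
  have hgb : ∀ x, ‖g x‖ ≤ 1 := by
    intro x; rw [hg]; dsimp only; split_ifs <;> simp
  have hprod : IntervalIntegrable (fun x => f x * g x) volume 0 1 := by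
    rw [intervalIntegrable_iff_integrableOn_Ioc_of_le zero_le_one] at hf ⊢
    have : IntegrableOn (fun x => g x * f x) (Set.Ioc 0 1) volume :=
      hf.bdd_mul hgm.aestronglyMeasurable (c := 1) (Filter.Eventually.of_forall hgb)
    simpa [mul_comm] using this
  -- interval inclusion helper
  have hmem : ∀ c : ℝ, 0 ≤ c → c ≤ 1 → c ∈ Set.uIcc (0:ℝ) 1 := by
    intro c h1 h2; rw [Set.uIcc_of_le zero_le_one]; exact ⟨h1, h2⟩
  have ha1 : a ≤ 1 := by linarith
  have haδ1 : a + δ ≤ 1 := by linarith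
  have haδ0 : 0 ≤ a + δ := by linarith
  have ha2δ0 : 0 ≤ a + 2*δ := by linarith
  have hsub : ∀ c d : ℝ, 0 ≤ c → c ≤ 1 → 0 ≤ d → d ≤ 1 →
      IntervalIntegrable (fun x => f x * g x) volume c d := fun c d h1 h2 h3 h4 =>
    hprod.mono_set (Set.uIcc_subset_uIcc (hmem c h1 h2) (hmem d h3 h4))
  have hsubf : ∀ c d : ℝ, 0 ≤ c → c ≤ 1 → 0 ≤ d → d ≤ 1 →
      IntervalIntegrable f volume c d := fun c d h1 h2 h3 h4 =>
    hf.mono_set (Set.uIcc_subset_uIcc (hmem c h1 h2) (hmem d h3 h4))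
  -- split the integral
  have split1 : (∫ x in (0:ℝ)..a, f x * g x) + ∫ x in a..1, f x * g x
      = ∫ x in (0:ℝ)..1, f x * g x :=
    intervalIntegral.integral_add_adjacent_intervals (hsub 0 a le_rfl zero_le_one ha0 ha1)
      (hsub a 1 ha0 ha1 zero_le_one le_rfl)
  have split2 : (∫ x in a..(a+δ), f x * g x) + ∫ x in (a+δ)..1, f x * g x
      = ∫ x in a..1, f x * g x :=
    intervalIntegral.integral_add_adjacent_intervals (hsub a (a+δ) ha0 ha1 haδ0 haδ1)
      (hsub (a+δ) 1 haδ0 haδ1 zero_le_one le_rfl)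
  have split3 : (∫ x in (a+δ)..(a+2*δ), f x * g x) + ∫ x in (a+2*δ)..1, f x * g x
      = ∫ x in (a+δ)..1, f x * g x :=
    intervalIntegral.integral_add_adjacent_intervals
      (hsub (a+δ) (a+2*δ) haδ0 haδ1 ha2δ0 hub)
      (hsub (a+2*δ) 1 ha2δ0 hub zero_le_one le_rfl)
  -- evaluate the pieces
  have p1 : (∫ x in (0:ℝ)..a, f x * g x) = 0 := by
    rw [intervalIntegral.integral_congr_ae (g := fun _ => (0:ℝ))]
    · simp
    · filter_upwards [ae_ne a] with x hx hmem
      rw [Set.uIoc_of_le ha0] at hmem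
      have hxa : x < a := lt_of_le_of_ne hmem.2 hx
      rw [hg]; dsimp only
      rw [if_neg (by push_neg; intro h; linarith), if_neg (by push_neg; intro h; linarith)]
      ring
  have p2 : (∫ x in a..(a+δ), f x * g x) = ∫ x in a..(a+δ), f x := by
    apply intervalIntegral.integral_congr_ae
    filter_upwards [ae_ne (a+δ)] with x hx hmem
    rw [Set.uIoc_of_le (by linarith)] at hmem
    have hxa : x < a + δ := lt_of_le_of_ne hmem.2 hx
    rw [hg]; dsimp only
    rw [if_pos ⟨le_of_lt hmem.1, hxa⟩]; ring
  have p3 : (∫ x in (a+δ)..(a+2*δ), f x * g x) = - ∫ x in (a+δ)..(a+2*δ), f x := by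
    rw [← intervalIntegral.integral_neg]
    apply intervalIntegral.integral_congr_ae
    filter_upwards [ae_ne (a+2*δ)] with x hx hmem
    rw [Set.uIoc_of_le (by linarith)] at hmem
    have hxa : x < a + 2*δ := lt_of_le_of_ne hmem.2 hx
    rw [hg]; dsimp only
    rw [if_neg (by push_neg; intro h; linarith [hmem.1]), if_pos ⟨le_of_lt hmem.1, hxa⟩]
    ring
  have p4 : (∫ x in (a+2*δ)..1, f x * g x) = 0 := by
    rw [intervalIntegral.integral_congr_ae (g := fun _ => (0:ℝ))]
    · simp
    · filter_upwards with x hmem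
      rw [Set.uIoc_of_le hub] at hmem
      rw [hg]; dsimp only
      rw [if_neg (by push_neg; intro h; linarith [hmem.1]),
        if_neg (by push_neg; intro h; linarith [hmem.1])]
      ring
  -- shift
  have shift : (∫ x in a..(a+δ), f (x + δ)) = ∫ x in (a+δ)..(a+2*δ), f x := by
    rw [intervalIntegral.integral_comp_add_right f δ]
    norm_num [show a + δ + δ = a + 2*δ by ring]
  have h2int : IntervalIntegrable (fun x => f (x+δ)) volume a (a+δ) := by
    have := (hsubf (a+δ) (a+2*δ) haδ0 haδ1 ha2δ0 hub).comp_add_right δ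
    rw [show a+δ-δ = a by ring, show a+2*δ-δ = a+δ by ring] at this
    exact this
  have rhs : (∫ x in a..(a+δ), (f x - f (x + δ)))
      = (∫ x in a..(a+δ), f x) - ∫ x in a..(a+δ), f (x+δ) :=
    intervalIntegral.integral_sub (hsubf a (a+δ) ha0 ha1 haδ0 haδ1) h2int
  rw [rhs, shift]
  linarith [split1, split2, split3, p1, p2, p3, p4]

lemma haar01_form (j k : ℕ) (x : ℝ) :
    haar01 j k x =
      (if (k:ℝ)/2^j ≤ x ∧ x < (k:ℝ)/2^j + 1/(2*2^j) then 1
       else if (k:ℝ)/2^j + 1/(2*2^j) ≤ x ∧ x < (k:ℝ)/2^j + 2*(1/(2*2^j)) then (-1:ℝ) else 0) := by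
  have h1 : ((k:ℝ) + 1/2) / 2^j = (k:ℝ)/2^j + 1/(2*2^j) := by
    field_simp
  have h2 : ((k:ℝ) + 1) / 2^j = (k:ℝ)/2^j + 2*(1/(2*2^j)) := by
    field_simp
  rw [haar01, h1, h2]

lemma haar_trick (j k : ℕ) (hk : k < 2 ^ j) (f : ℝ → ℝ)
    (hf : IntervalIntegrable f volume 0 1) :
    (∫ x in (0:ℝ)..1, f x * haar01 j k x)
      = ∫ x in ((k:ℝ)/2^j)..((k:ℝ)/2^j + 1/(2*2^j)), (f x - f (x + 1/(2*2^j))) := by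
  have hub : (k:ℝ)/2^j + 2*(1/(2*2^j)) ≤ 1 := by
    have hk' : (k:ℝ) + 1 ≤ 2^j := by exact_mod_cast Nat.succ_le_of_lt hk
    have hpos : (0:ℝ) < 2^j := by positivity
    rw [show (k:ℝ)/2^j + 2*(1/(2*2^j)) = ((k:ℝ)+1)/2^j by field_simp,
      div_le_one hpos]
    exact hk'
  have := haar_trick' f ((k:ℝ)/2^j) (1/(2*2^j)) (by positivity) (by positivity) hub hf
  rw [← this]
  apply intervalIntegral.integral_congr
  intro x _
  simp only [haar01_form]
lemma haar_ub (j k : ℕ) (hk : k < 2 ^ j) :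
    (k:ℝ)/2^j + 2*(1/(2*2^j)) ≤ 1 := by
  have hk' : (k:ℝ) + 1 ≤ 2^j := by exact_mod_cast Nat.succ_le_of_lt hk
  have hpos : (0:ℝ) < 2^j := by positivity
  rw [show (k:ℝ)/2^j + 2*(1/(2*2^j)) = ((k:ℝ)+1)/2^j by field_simp,
    div_le_one hpos]
  exact hk'

set_option maxHeartbeats 1000000 in
theorem haar_coeff_decay_2d (v : ℝ → ℝ → ℝ) (L : ℝ)
    (hv : ∀ x ∈ Set.Icc (0 : ℝ) 1, ∀ y ∈ Set.Icc (0 : ℝ) 1,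
      ∀ x' ∈ Set.Icc (0 : ℝ) 1, ∀ y' ∈ Set.Icc (0 : ℝ) 1,
        |v x y - v x' y'| ≤ L * Real.sqrt ((x - x') ^ 2 + (y - y') ^ 2))
    (j k₁ k₂ : ℕ) (hk₁ : k₁ < 2 ^ j) (hk₂ : k₂ < 2 ^ j) :
    |∫ x in (0 : ℝ)..1, ∫ y in (0 : ℝ)..1, v x y * haar01 j k₁ x * haar01 j k₂ y|
      ≤ L / (4 * ((2 : ℝ) ^ j) ^ 3) := by
  have hL : 0 ≤ L := by
    have h := hv 0 (by norm_num) 0 (by norm_num) 1 (by norm_num) 0 (by norm_num)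
    have hs : Real.sqrt (((0:ℝ) - 1) ^ 2 + ((0:ℝ) - 0) ^ 2) = 1 := by
      norm_num
    rw [hs, mul_one] at h
    exact le_trans (abs_nonneg _) h
  -- horizontal Lipschitz estimate
  have hvx : ∀ x ∈ Set.Icc (0:ℝ) 1, ∀ x' ∈ Set.Icc (0:ℝ) 1, ∀ y ∈ Set.Icc (0:ℝ) 1,
      |v x y - v x' y| ≤ L * |x - x'| := by
    intro x hx x' hx' y hy
    have h := hv x hx y hy x' hx' y hy
    simpa [sub_self, Real.sqrt_sq_eq_abs] using h
  -- vertical Lipschitz estimate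
  have hvy : ∀ x ∈ Set.Icc (0:ℝ) 1, ∀ y ∈ Set.Icc (0:ℝ) 1, ∀ y' ∈ Set.Icc (0:ℝ) 1,
      |v x y - v x y'| ≤ L * |y - y'| := by
    intro x hx y hy y' hy'
    have h := hv x hx y hy x hx y' hy'
    simpa [sub_self, Real.sqrt_sq_eq_abs] using h
  set δ : ℝ := 1/(2*2^j) with hδdef
  have hδ0 : 0 < δ := by rw [hδdef]; positivity
  have hδ1 : δ ≤ 1 := by
    rw [hδdef]
    rw [div_le_one (by positivity)]
    have : (1:ℝ) ≤ 2^j := one_le_pow₀ (by norm_num)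
    linarith
  set a₁ : ℝ := (k₁:ℝ)/2^j with ha₁def
  set a₂ : ℝ := (k₂:ℝ)/2^j with ha₂def
  have ha₁0 : 0 ≤ a₁ := by rw [ha₁def]; positivity
  have ha₂0 : 0 ≤ a₂ := by rw [ha₂def]; positivity
  have hub₁ : a₁ + 2*δ ≤ 1 := haar_ub j k₁ hk₁
  have hub₂ : a₂ + 2*δ ≤ 1 := haar_ub j k₂ hk₂
  -- slice continuity and integrability
  have hcont : ∀ x ∈ Set.Icc (0:ℝ) 1, ContinuousOn (fun y => v x y) (Set.Icc (0:ℝ) 1) := by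
    intro x hx
    apply LipschitzOnWith.continuousOn (K := L.toNNReal)
    rw [lipschitzOnWith_iff_dist_le_mul]
    intro y hy y' hy'
    rw [Real.dist_eq, Real.dist_eq, Real.coe_toNNReal L hL]
    exact hvy x hx y hy y' hy'
  have hint : ∀ x ∈ Set.Icc (0:ℝ) 1, IntervalIntegrable (fun y => v x y) volume 0 1 := by
    intro x hx
    exact ContinuousOn.intervalIntegrable
      (by rw [Set.uIcc_of_le zero_le_one]; exact hcont x hx)
  set F : ℝ → ℝ := fun x => ∫ y in (0:ℝ)..1, v x y * haar01 j k₂ y with hFdef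
  have hFrep : ∀ x ∈ Set.Icc (0:ℝ) 1,
      F x = ∫ y in a₂..(a₂+δ), (v x y - v x (y+δ)) := by
    intro x hx
    exact haar_trick j k₂ hk₂ (fun y => v x y) (hint x hx)
  -- integrability of the difference integrand
  have hmaps : Set.MapsTo (fun y : ℝ => y + δ) (Set.Icc a₂ (a₂+δ)) (Set.Icc (0:ℝ) 1) := by
    intro y hy
    simp only [Set.mem_Icc] at hy ⊢
    exact ⟨by linarith [hy.1], by linarith [hy.2]⟩
  have hIccsub : Set.Icc a₂ (a₂+δ) ⊆ Set.Icc (0:ℝ) 1 := by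
    intro y hy
    exact ⟨by have := hy.1; linarith, by have := hy.2; linarith⟩
  have hgint : ∀ x ∈ Set.Icc (0:ℝ) 1,
      IntervalIntegrable (fun y => v x y - v x (y+δ)) volume a₂ (a₂+δ) := by
    intro x hx
    apply ContinuousOn.intervalIntegrable
    rw [Set.uIcc_of_le (by linarith)]
    exact ((hcont x hx).mono hIccsub).sub
      (ContinuousOn.comp (hcont x hx)
        (Continuous.continuousOn (by continuity)) hmaps)
  -- key difference bound
  have hFdiff : ∀ x ∈ Set.Icc (0:ℝ) 1, ∀ x' ∈ Set.Icc (0:ℝ) 1,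
      |F x - F x'| ≤ 2 * L * |x - x'| * δ := by
    intro x hx x' hx'
    rw [hFrep x hx, hFrep x' hx',
      ← intervalIntegral.integral_sub (hgint x hx) (hgint x' hx')]
    have hb : ∀ y ∈ Set.uIoc a₂ (a₂+δ),
        ‖(v x y - v x (y+δ)) - (v x' y - v x' (y+δ))‖ ≤ 2 * L * |x - x'| := by
      intro y hy
      rw [Set.uIoc_of_le (by linarith)] at hy
      have hy1 : y ∈ Set.Icc (0:ℝ) 1 := ⟨by have := hy.1; linarith, by have := hy.2; linarith⟩
      have hy2 : y + δ ∈ Set.Icc (0:ℝ) 1 := ⟨by have := hy.1; linarith, by have := hy.2; linarith⟩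
      have h1 := hvx x hx x' hx' y hy1
      have h2 := hvx x hx x' hx' (y+δ) hy2
      rw [Real.norm_eq_abs]
      calc |(v x y - v x (y+δ)) - (v x' y - v x' (y+δ))|
          = |(v x y - v x' y) - (v x (y+δ) - v x' (y+δ))| := by ring_nf
        _ ≤ |v x y - v x' y| + |v x (y+δ) - v x' (y+δ)| := abs_sub _ _
        _ ≤ L * |x - x'| + L * |x - x'| := add_le_add h1 h2
        _ = 2 * L * |x - x'| := by ring
    have := intervalIntegral.norm_integral_le_of_norm_le_const hb
    rw [Real.norm_eq_abs, show a₂ + δ - a₂ = δ by ring, abs_of_pos hδ0] at this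
    exact this
  -- F is Lipschitz, hence interval integrable
  have hFint : IntervalIntegrable F volume 0 1 := by
    apply ContinuousOn.intervalIntegrable
    rw [Set.uIcc_of_le zero_le_one]
    apply LipschitzOnWith.continuousOn (K := (2*L).toNNReal)
    rw [lipschitzOnWith_iff_dist_le_mul]
    intro x hx x' hx'
    rw [Real.dist_eq, Real.dist_eq, Real.coe_toNNReal (2*L) (by linarith)]
    calc |F x - F x'| ≤ 2 * L * |x - x'| * δ := hFdiff x hx x' hx'
      _ ≤ 2 * L * |x - x'| * 1 := by
          apply mul_le_mul_of_nonneg_left hδ1; positivity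
      _ = 2 * L * |x - x'| := by ring
  -- rewrite the double integral
  have step1 : (∫ x in (0:ℝ)..1, ∫ y in (0:ℝ)..1, v x y * haar01 j k₁ x * haar01 j k₂ y)
      = ∫ x in (0:ℝ)..1, F x * haar01 j k₁ x := by
    apply intervalIntegral.integral_congr
    intro x _
    dsimp only
    calc (∫ y in (0:ℝ)..1, v x y * haar01 j k₁ x * haar01 j k₂ y)
        = ∫ y in (0:ℝ)..1, (v x y * haar01 j k₂ y) * haar01 j k₁ x :=
          intervalIntegral.integral_congr (fun y _ => by ring)
      _ = (∫ y in (0:ℝ)..1, v x y * haar01 j k₂ y) * haar01 j k₁ x :=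
          intervalIntegral.integral_mul_const _ _
      _ = F x * haar01 j k₁ x := rfl
  have step2 : (∫ x in (0:ℝ)..1, F x * haar01 j k₁ x)
      = ∫ x in a₁..(a₁+δ), (F x - F (x+δ)) := haar_trick j k₁ hk₁ F hFint
  rw [step1, step2]
  have hb2 : ∀ x ∈ Set.uIoc a₁ (a₁+δ), ‖F x - F (x+δ)‖ ≤ 2 * L * δ * δ := by
    intro x hx
    rw [Set.uIoc_of_le (by linarith)] at hx
    have hx1 : x ∈ Set.Icc (0:ℝ) 1 := ⟨by have := hx.1; linarith, by have := hx.2; linarith⟩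
    have hx2 : x + δ ∈ Set.Icc (0:ℝ) 1 := ⟨by have := hx.1; linarith, by have := hx.2; linarith⟩
    have h := hFdiff x hx1 (x+δ) hx2
    rw [show x - (x+δ) = -δ by ring, abs_neg, abs_of_pos hδ0] at h
    rw [Real.norm_eq_abs]
    exact h
  have hfinal := intervalIntegral.norm_integral_le_of_norm_le_const hb2
  rw [Real.norm_eq_abs, show a₁ + δ - a₁ = δ by ring, abs_of_pos hδ0] at hfinal
  calc |∫ x in a₁..(a₁+δ), (F x - F (x+δ))| ≤ 2 * L * δ * δ * δ := hfinal
    _ = L / (4 * ((2:ℝ)^j)^3) := by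
        rw [hδdef]; field_simp; ring
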